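/- arXiv:1211.1435 — 3 statements merged into one kernel-verified Lean document; each statement's English description precedes it below -/
import Mathlib

section
/- Let d ∈ ℕ, τ > d/2, and let ψ : ℝ^d → ℝ be an integrable even function whose Fourier transform satisfies c₁(1+‖ω‖₂²)^{-τ} ≤ ψ̂(ω) ≤ c₂(1+‖ω‖₂²)^{-τ} for all ω ∈ ℝ^d, with constants 0 < c₁ ≤ c₂. Fix δ_a > 0. Then for every δ ∈ (0, δ_a] and every g ∈ H^τ(ℝ^d) there exist constants 0 < c₃ ≤ c₄ (depending only on c₁, c₂, τ, δ_a) such that c₃ ‖g‖_{Φ_δ} ≤ ‖g‖_{H^τ(ℝ^d)} ≤ c₄ δ^{-τ} ‖g‖_{Φ_δ}. -/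
/-!
Both squared norms integrate `|ĝ|²` against a weight, so it suffices to compare the weights
pointwise. By the two-sided bound on `ψ̂`, the weight `1 / ψ̂(δω)` of the native norm is comparable
to `(1 + δ²‖ω‖²)^τ`, and with `M = max 1 δ_a²` one has, for `0 < δ ≤ δ_a`,
`δ² (1 + ‖ω‖²) ≤ M (1 + δ²‖ω‖²)` and `1 + δ²‖ω‖² ≤ M (1 + ‖ω‖²)`.
Raising these to the power `τ ≥ 0` gives the two estimates; the factor `δ^{-τ}` comes from the
first one.
-/

open MeasureTheory

noncomputable def ft {d : ℕ} (g : EuclideanSpace ℝ (Fin d) → ℂ)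
    (ω : EuclideanSpace ℝ (Fin d)) : ℂ :=
  (((2 * Real.pi) ^ (-(d : ℝ) / 2) : ℝ) : ℂ) *
    ∫ x, g x * Complex.exp (-Complex.I * ((@inner ℝ _ _ x ω : ℝ) : ℂ))

theorem continuous_ft {d : ℕ} {g : EuclideanSpace ℝ (Fin d) → ℂ} (hg : Integrable g) :
    Continuous (ft g) := by
  refine continuous_const.mul (continuous_of_dominated (bound := fun x => ‖g x‖) (fun ω => ?_)
    (fun ω => .of_forall fun x => ?_) hg.norm (.of_forall fun x => by fun_prop))
  · exact hg.aestronglyMeasurable.mul (by fun_prop : Continuous _).aestronglyMeasurable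
  · rw [norm_mul, Complex.norm_exp]
    simp

namespace Real

theorem mul_sqrt_le_sqrt {k x y : ℝ} (hk : 0 ≤ k) (h : k ^ 2 * x ≤ y) : k * √x ≤ √y := by
  rw [← sqrt_sq hk, ← sqrt_mul (sq_nonneg k)]
  exact sqrt_le_sqrt h

theorem sqrt_le_mul_sqrt {k x y : ℝ} (hk : 0 ≤ k) (h : y ≤ k ^ 2 * x) : √y ≤ k * √x := by
  rw [← sqrt_sq hk, ← sqrt_mul (sq_nonneg k)]
  exact sqrt_le_sqrt h

end Real

theorem integral_le_const_mul_integral {α : Type*} [MeasurableSpace α] {μ : Measure α}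
    {f g : α → ℝ} {K : ℝ} (hf : ∀ x, 0 ≤ f x) (hg : Integrable g μ) (hfg : ∀ x, f x ≤ K * g x) :
    ∫ x, f x ∂μ ≤ K * ∫ x, g x ∂μ :=
  (integral_mono_of_nonneg (.of_forall hf) (hg.const_mul K) (.of_forall hfg)).trans_eq
    (integral_const_mul K g)

section ScaledWeight

variable {δ M τ t : ℝ}

theorem one_add_sq_mul_rpow_le (hτ : 0 ≤ τ) (hM : 1 ≤ M) (hδM : δ ^ 2 ≤ M) (ht : 0 ≤ t) :
    (1 + δ ^ 2 * t) ^ τ ≤ M ^ τ * (1 + t) ^ τ := by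
  rw [← Real.mul_rpow (by positivity) (by positivity)]
  refine Real.rpow_le_rpow (by positivity) ?_ hτ
  nlinarith

theorem one_add_rpow_le (hτ : 0 ≤ τ) (hδ : 0 < δ) (hM : 1 ≤ M) (hδM : δ ^ 2 ≤ M) (ht : 0 ≤ t) :
    (1 + t) ^ τ ≤ (δ ^ (-τ)) ^ 2 * M ^ τ * (1 + δ ^ 2 * t) ^ τ := by
  rw [Real.rpow_pow_comm hδ.le, Real.rpow_neg (by positivity), ← Real.inv_rpow (by positivity),
    ← Real.mul_rpow (by positivity) (by positivity),
    ← Real.mul_rpow (by positivity) (by positivity)]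
  refine Real.rpow_le_rpow (by positivity) ?_ hτ
  rw [mul_assoc, le_inv_mul_iff₀ (by positivity)]
  nlinarith [mul_le_mul_of_nonneg_right hM (by positivity : 0 ≤ δ ^ 2 * t)]

end ScaledWeight

section ScaledSymbol

variable {E : Type*} [NormedAddCommGroup E] [NormedSpace ℝ E] {h : E → ℝ} {c₁ c₂ τ δ M : ℝ}

theorem norm_smul_sq (δ : ℝ) (ω : E) : ‖δ • ω‖ ^ 2 = δ ^ 2 * ‖ω‖ ^ 2 := by
  rw [norm_smul, mul_pow, Real.norm_eq_abs, sq_abs]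

theorem inv_comp_smul_le (hτ : 0 ≤ τ) (hc₁ : 0 < c₁)
    (hlow : ∀ ξ, c₁ * (1 + ‖ξ‖ ^ 2) ^ (-τ) ≤ h ξ) (hM : 1 ≤ M) (hδM : δ ^ 2 ≤ M) (ω : E) :
    (h (δ • ω))⁻¹ ≤ M ^ τ / c₁ * (1 + ‖ω‖ ^ 2) ^ τ := by
  calc (h (δ • ω))⁻¹ ≤ (c₁ * (1 + ‖δ • ω‖ ^ 2) ^ (-τ))⁻¹ := inv_anti₀ (by positivity) (hlow _)
    _ = (1 + δ ^ 2 * ‖ω‖ ^ 2) ^ τ / c₁ := by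
      rw [norm_smul_sq, Real.rpow_neg (by positivity), mul_inv, inv_inv, div_eq_inv_mul]
    _ ≤ M ^ τ * (1 + ‖ω‖ ^ 2) ^ τ / c₁ := by
      gcongr
      exact one_add_sq_mul_rpow_le hτ hM hδM (by positivity)
    _ = M ^ τ / c₁ * (1 + ‖ω‖ ^ 2) ^ τ := by ring

theorem rpow_le_inv_comp_smul (hτ : 0 ≤ τ) (hpos : ∀ ξ, 0 < h ξ)
    (hhigh : ∀ ξ, h ξ ≤ c₂ * (1 + ‖ξ‖ ^ 2) ^ (-τ)) (hδ : 0 < δ) (hM : 1 ≤ M) (hδM : δ ^ 2 ≤ M)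
    (ω : E) :
    (1 + ‖ω‖ ^ 2) ^ τ ≤ c₂ * (δ ^ (-τ)) ^ 2 * M ^ τ * (h (δ • ω))⁻¹ := by
  have hscaled : (1 + δ ^ 2 * ‖ω‖ ^ 2) ^ τ ≤ c₂ * (h (δ • ω))⁻¹ := by
    rw [le_mul_inv_iff₀ (hpos _), ← norm_smul_sq]
    calc (1 + ‖δ • ω‖ ^ 2) ^ τ * h (δ • ω)
        ≤ (1 + ‖δ • ω‖ ^ 2) ^ τ * (c₂ * (1 + ‖δ • ω‖ ^ 2) ^ (-τ)) := by gcongr; exact hhigh _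
      _ = c₂ := by
        rw [Real.rpow_neg (by positivity)]
        field_simp
  calc (1 + ‖ω‖ ^ 2) ^ τ ≤ (δ ^ (-τ)) ^ 2 * M ^ τ * (1 + δ ^ 2 * ‖ω‖ ^ 2) ^ τ :=
        one_add_rpow_le hτ hδ hM hδM (by positivity)
    _ ≤ (δ ^ (-τ)) ^ 2 * M ^ τ * (c₂ * (h (δ • ω))⁻¹) := by gcongr
    _ = c₂ * (δ ^ (-τ)) ^ 2 * M ^ τ * (h (δ • ω))⁻¹ := by ring

variable [MeasurableSpace E] {μ : Measure E} {F : E → ℝ}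

theorem integral_div_comp_smul_le (hF : ∀ ω, 0 ≤ F ω) (hτ : 0 ≤ τ) (hc₁ : 0 < c₁)
    (hlow : ∀ ξ, c₁ * (1 + ‖ξ‖ ^ 2) ^ (-τ) ≤ h ξ) (hM : 1 ≤ M) (hδM : δ ^ 2 ≤ M)
    (hint : Integrable (fun ω => F ω * (1 + ‖ω‖ ^ 2) ^ τ) μ) :
    ∫ ω, F ω / h (δ • ω) ∂μ ≤ M ^ τ / c₁ * ∫ ω, F ω * (1 + ‖ω‖ ^ 2) ^ τ ∂μ := by
  have hpos : ∀ ξ, 0 < h ξ := fun ξ => (by positivity : 0 < c₁ * _).trans_le (hlow ξ)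
  refine integral_le_const_mul_integral (fun ω => div_nonneg (hF ω) (hpos _).le) hint fun ω => ?_
  calc F ω / h (δ • ω) = F ω * (h (δ • ω))⁻¹ := div_eq_mul_inv _ _
    _ ≤ F ω * (M ^ τ / c₁ * (1 + ‖ω‖ ^ 2) ^ τ) :=
      mul_le_mul_of_nonneg_left (inv_comp_smul_le hτ hc₁ hlow hM hδM ω) (hF ω)
    _ = _ := by ring

theorem integrable_div_comp_smul [BorelSpace E] (hF : ∀ ω, 0 ≤ F ω) (hτ : 0 ≤ τ) (hc₁ : 0 < c₁)
    (hh : Continuous h) (hlow : ∀ ξ, c₁ * (1 + ‖ξ‖ ^ 2) ^ (-τ) ≤ h ξ) (hM : 1 ≤ M)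
    (hδM : δ ^ 2 ≤ M) (hint : Integrable (fun ω => F ω * (1 + ‖ω‖ ^ 2) ^ τ) μ) :
    Integrable (fun ω => F ω / h (δ • ω)) μ := by
  have hpos : ∀ ξ, 0 < h ξ := fun ξ => (by positivity : 0 < c₁ * _).trans_le (hlow ξ)
  have hweight : Continuous fun ω : E => (1 + ‖ω‖ ^ 2) ^ τ :=
    (by fun_prop : Continuous fun ω : E => 1 + ‖ω‖ ^ 2).rpow_const fun ω => .inl (by positivity)
  have hFm : AEStronglyMeasurable F μ := by
    refine (hint.aestronglyMeasurable.div₀ hweight.aestronglyMeasurable).congr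
      (.of_forall fun ω => ?_)
    have : (1 + ‖ω‖ ^ 2) ^ τ ≠ 0 := by positivity
    simp only [Pi.div_apply]
    field_simp
  refine (hint.const_mul (M ^ τ / c₁)).mono'
    (hFm.div₀ (hh.comp (continuous_const_smul δ)).aestronglyMeasurable) (.of_forall fun ω => ?_)
  rw [Real.norm_of_nonneg (div_nonneg (hF ω) (hpos _).le), div_eq_mul_inv]
  calc F ω * (h (δ • ω))⁻¹ ≤ F ω * (M ^ τ / c₁ * (1 + ‖ω‖ ^ 2) ^ τ) :=
      mul_le_mul_of_nonneg_left (inv_comp_smul_le hτ hc₁ hlow hM hδM ω) (hF ω)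
    _ = _ := by ring

theorem integral_le_integral_div_comp_smul (hF : ∀ ω, 0 ≤ F ω) (hτ : 0 ≤ τ)
    (hpos : ∀ ξ, 0 < h ξ) (hhigh : ∀ ξ, h ξ ≤ c₂ * (1 + ‖ξ‖ ^ 2) ^ (-τ)) (hδ : 0 < δ)
    (hM : 1 ≤ M) (hδM : δ ^ 2 ≤ M) (hint : Integrable (fun ω => F ω / h (δ • ω)) μ) :
    ∫ ω, F ω * (1 + ‖ω‖ ^ 2) ^ τ ∂μ ≤ c₂ * (δ ^ (-τ)) ^ 2 * M ^ τ * ∫ ω, F ω / h (δ • ω) ∂μ := by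
  refine integral_le_const_mul_integral (fun ω => mul_nonneg (hF ω) (by positivity)) hint
    fun ω => ?_
  calc F ω * (1 + ‖ω‖ ^ 2) ^ τ ≤ F ω * (c₂ * (δ ^ (-τ)) ^ 2 * M ^ τ * (h (δ • ω))⁻¹) :=
      mul_le_mul_of_nonneg_left (rpow_le_inv_comp_smul hτ hpos hhigh hδ hM hδM ω) (hF ω)
    _ = _ := by ring

end ScaledSymbol

theorem stmt0_general
    (d : ℕ) (τ : ℝ) (hτ : (d : ℝ) / 2 < τ)
    (ψ : EuclideanSpace ℝ (Fin d) → ℝ)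
    (hψint : Integrable ψ)
    (hatψ : EuclideanSpace ℝ (Fin d) → ℝ)
    (hhat : ∀ ω, ft (fun x => (ψ x : ℂ)) ω = (hatψ ω : ℂ))
    (c₁ c₂ : ℝ) (hc₁ : 0 < c₁) (hc₁₂ : c₁ ≤ c₂)
    (hlow : ∀ ω : EuclideanSpace ℝ (Fin d), c₁ * (1 + ‖ω‖ ^ 2) ^ (-τ) ≤ hatψ ω)
    (hhigh : ∀ ω : EuclideanSpace ℝ (Fin d), hatψ ω ≤ c₂ * (1 + ‖ω‖ ^ 2) ^ (-τ))
    (δa : ℝ) :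
    ∃ c₃ c₄ : ℝ, 0 < c₃ ∧ c₃ ≤ c₄ ∧
      ∀ δ : ℝ, 0 < δ → δ ≤ δa →
        ∀ g : EuclideanSpace ℝ (Fin d) → ℂ,
          Integrable (fun ω : EuclideanSpace ℝ (Fin d) =>
            ‖ft g ω‖ ^ 2 * (1 + ‖ω‖ ^ 2) ^ τ) →
          c₃ * Real.sqrt ((2 * Real.pi) ^ (-(d : ℝ) / 2) *
              ∫ ω : EuclideanSpace ℝ (Fin d), ‖ft g ω‖ ^ 2 / hatψ (δ • ω)) ≤
            Real.sqrt (∫ ω : EuclideanSpace ℝ (Fin d), ‖ft g ω‖ ^ 2 * (1 + ‖ω‖ ^ 2) ^ τ) ∧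
          Real.sqrt (∫ ω : EuclideanSpace ℝ (Fin d), ‖ft g ω‖ ^ 2 * (1 + ‖ω‖ ^ 2) ^ τ) ≤
            c₄ * δ ^ (-τ) * Real.sqrt ((2 * Real.pi) ^ (-(d : ℝ) / 2) *
              ∫ ω : EuclideanSpace ℝ (Fin d), ‖ft g ω‖ ^ 2 / hatψ (δ • ω)) := by
  have hτ0 : 0 ≤ τ := (by positivity : (0 : ℝ) ≤ d / 2).trans hτ.le
  have hc₂ : 0 < c₂ := hc₁.trans_le hc₁₂
  have hpos : ∀ ξ, 0 < hatψ ξ := fun ξ => (by positivity : 0 < c₁ * _).trans_le (hlow ξ)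
  have hcont : Continuous hatψ :=
    (Complex.continuous_re.comp (continuous_ft hψint.ofReal)).congr fun ω => by simp [hhat]
  set C : ℝ := (2 * Real.pi) ^ (-(d : ℝ) / 2)
  have hC : 0 < C := by positivity
  obtain ⟨M, hM, hδaM, hMτ⟩ : ∃ M, 1 ≤ M ∧ δa ^ 2 ≤ M ∧ 1 ≤ M ^ τ :=
    ⟨max 1 (δa ^ 2), le_max_left _ _, le_max_right _ _, Real.one_le_rpow (le_max_left _ _) hτ0⟩
  refine ⟨√(c₁ / (C * M ^ τ)), √(c₂ * M ^ τ / C), by positivity, Real.sqrt_le_sqrt ?_,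
    fun δ hδ hδa g hg => ?_⟩
  · calc c₁ / (C * M ^ τ) ≤ c₁ / C := by gcongr; exact le_mul_of_one_le_right hC.le hMτ
      _ ≤ c₂ * M ^ τ / C := by gcongr; exact hc₁₂.trans (le_mul_of_one_le_right hc₂.le hMτ)
  have hδM : δ ^ 2 ≤ M := (pow_le_pow_left₀ hδ.le hδa 2).trans hδaM
  have hF : ∀ ω, 0 ≤ ‖ft g ω‖ ^ 2 := fun ω => by positivity
  have hlower := integral_div_comp_smul_le hF hτ0 hc₁ hlow hM hδM hg
  have hupper := integral_le_integral_div_comp_smul hF hτ0 hpos hhigh hδ hM hδM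
    (integrable_div_comp_smul hF hτ0 hc₁ hcont hlow hM hδM hg)
  constructor
  · refine Real.mul_sqrt_le_sqrt (by positivity) ?_
    rw [Real.sq_sqrt (by positivity)]
    calc c₁ / (C * M ^ τ) * (C * ∫ ω, ‖ft g ω‖ ^ 2 / hatψ (δ • ω))
        ≤ c₁ / (C * M ^ τ) * (C * (M ^ τ / c₁ * ∫ ω, ‖ft g ω‖ ^ 2 * (1 + ‖ω‖ ^ 2) ^ τ)) := by
          grw [hlower]
      _ = ∫ ω, ‖ft g ω‖ ^ 2 * (1 + ‖ω‖ ^ 2) ^ τ := by field_simp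
  · refine Real.sqrt_le_mul_sqrt (by positivity) (hupper.trans_eq ?_)
    rw [mul_pow, Real.sq_sqrt (by positivity)]
    field_simp

/-- norm equivalence between the scaled native space norm `‖·‖_{Φ_δ}` and the
Sobolev norm `‖·‖_{H^τ(ℝ^d)}`, with constants depending only on `c₁, c₂, τ, δ_a`.
Here `‖g‖²_{H^τ} = ∫ |ĝ(ω)|²(1+‖ω‖²)^τ dω` and
`‖g‖²_{Φ_δ} = (2π)^{-d/2} ∫ |ĝ(ω)|²/ψ̂(δω) dω`, since `ψ̂_δ(ω) = ψ̂(δω)`. -/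
theorem stmt0
    (d : ℕ) (hd : 0 < d) (τ : ℝ) (hτ : (d : ℝ) / 2 < τ)
    (ψ : EuclideanSpace ℝ (Fin d) → ℝ)
    (hψint : Integrable ψ)
    (hψeven : ∀ x, ψ (-x) = ψ x)
    (hatψ : EuclideanSpace ℝ (Fin d) → ℝ)
    (hhat : ∀ ω, ft (fun x => (ψ x : ℂ)) ω = (hatψ ω : ℂ))
    (c₁ c₂ : ℝ) (hc₁ : 0 < c₁) (hc₁₂ : c₁ ≤ c₂)
    (hlow : ∀ ω : EuclideanSpace ℝ (Fin d), c₁ * (1 + ‖ω‖ ^ 2) ^ (-τ) ≤ hatψ ω)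
    (hhigh : ∀ ω : EuclideanSpace ℝ (Fin d), hatψ ω ≤ c₂ * (1 + ‖ω‖ ^ 2) ^ (-τ))
    (δa : ℝ) (hδa : 0 < δa) :
    ∃ c₃ c₄ : ℝ, 0 < c₃ ∧ c₃ ≤ c₄ ∧
      ∀ δ : ℝ, 0 < δ → δ ≤ δa →
        ∀ g : EuclideanSpace ℝ (Fin d) → ℂ,
          Integrable (fun ω : EuclideanSpace ℝ (Fin d) =>
            ‖ft g ω‖ ^ 2 * (1 + ‖ω‖ ^ 2) ^ τ) →
          c₃ * Real.sqrt ((2 * Real.pi) ^ (-(d : ℝ) / 2) *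
              ∫ ω : EuclideanSpace ℝ (Fin d), ‖ft g ω‖ ^ 2 / hatψ (δ • ω)) ≤
            Real.sqrt (∫ ω : EuclideanSpace ℝ (Fin d), ‖ft g ω‖ ^ 2 * (1 + ‖ω‖ ^ 2) ^ τ) ∧
          Real.sqrt (∫ ω : EuclideanSpace ℝ (Fin d), ‖ft g ω‖ ^ 2 * (1 + ‖ω‖ ^ 2) ^ τ) ≤
            c₄ * δ ^ (-τ) * Real.sqrt ((2 * Real.pi) ^ (-(d : ℝ) / 2) *
              ∫ ω : EuclideanSpace ℝ (Fin d), ‖ft g ω‖ ^ 2 / hatψ (δ • ω)) :=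
  stmt0_general d τ hτ ψ hψint hatψ hhat c₁ c₂ hc₁ hc₁₂ hlow hhigh δa
end

section
/- Let τ > 1 and let ψ : ℝ^d → ℝ be an even integrable function whose Fourier transform satisfies c₁(1+‖ω‖₂²)^{-τ+1} ≤ ψ̂(ω) ≤ c₂(1+‖ω‖₂²)^{-τ+1} for all ω ∈ ℝ^d, with 0 < c₁ ≤ c₂. Then for all scale parameters 0 < a ≤ 1 with a ≤ δ ≤ 1, and for all ω ∈ ℝ^d, the Fourier transforms of the scaled kernels satisfy ψ̂_δ(ω) ≥ (c₁/c₂) (a/δ)^{2τ−2} ψ̂_a(ω). -/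
open MeasureTheory

/-!
Write `x = δω` and `t = a/δ ∈ (0, 1]`, so that `aω = t • x`. For `p ≥ 0` the elementary inequality
`t²(1 + ‖x‖²) ≤ 1 + ‖t • x‖²` raised to the power `p` gives
`t^{2p} (1 + ‖t • x‖²)^{-p} ≤ (1 + ‖x‖²)^{-p}`; sandwiching `ψ̂` between the two multiples of
`(1 + ‖·‖²)^{-p}` then loses only the factor `c₁/c₂`.
-/

section

variable {E : Type*} [NormedAddCommGroup E] [NormedSpace ℝ E]

theorem sq_mul_one_add_norm_sq_le_one_add_norm_smul_sq {t : ℝ} (ht : |t| ≤ 1) (x : E) :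
    t ^ 2 * (1 + ‖x‖ ^ 2) ≤ 1 + ‖t • x‖ ^ 2 := by
  have ht2 : t ^ 2 ≤ 1 := (sq_le_one_iff_abs_le_one t).mpr ht
  rw [norm_smul, Real.norm_eq_abs, mul_pow, sq_abs]
  linarith

theorem rpow_mul_one_add_norm_smul_sq_rpow_neg_le {t p : ℝ} (ht₀ : 0 < t) (ht₁ : t ≤ 1)
    (hp : 0 ≤ p) (x : E) :
    t ^ (2 * p) * (1 + ‖t • x‖ ^ 2) ^ (-p) ≤ (1 + ‖x‖ ^ 2) ^ (-p) := by
  have hx : 0 < 1 + ‖x‖ ^ 2 := by positivity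
  have htx : 0 < 1 + ‖t • x‖ ^ 2 := by positivity
  have key : (t ^ 2 * (1 + ‖x‖ ^ 2)) ^ p ≤ (1 + ‖t • x‖ ^ 2) ^ p :=
    Real.rpow_le_rpow (by positivity)
      (sq_mul_one_add_norm_sq_le_one_add_norm_smul_sq (abs_le.mpr ⟨by linarith, ht₁⟩) x) hp
  rw [Real.mul_rpow (by positivity) hx.le, ← Real.rpow_natCast, ← Real.rpow_mul ht₀.le] at key
  rw [Real.rpow_neg htx.le, Real.rpow_neg hx.le, ← div_eq_mul_inv,
    div_le_iff₀ (Real.rpow_pos_of_pos htx p), le_inv_mul_iff₀ (Real.rpow_pos_of_pos hx p),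
    mul_comm]
  simpa using key

theorem le_of_two_sided_rpow_bound_smul {f : E → ℝ} {c₁ c₂ p t : ℝ} (hc₁ : 0 ≤ c₁) (hc₂ : 0 < c₂)
    (hp : 0 ≤ p) (hlow : ∀ x, c₁ * (1 + ‖x‖ ^ 2) ^ (-p) ≤ f x)
    (hhigh : ∀ x, f x ≤ c₂ * (1 + ‖x‖ ^ 2) ^ (-p)) (ht₀ : 0 < t) (ht₁ : t ≤ 1) (x : E) :
    c₁ / c₂ * t ^ (2 * p) * f (t • x) ≤ f x :=
  calc c₁ / c₂ * t ^ (2 * p) * f (t • x)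
      ≤ c₁ / c₂ * t ^ (2 * p) * (c₂ * (1 + ‖t • x‖ ^ 2) ^ (-p)) := by
        gcongr
        exact hhigh _
    _ = c₁ * (t ^ (2 * p) * (1 + ‖t • x‖ ^ 2) ^ (-p)) := by field_simp
    _ ≤ c₁ * (1 + ‖x‖ ^ 2) ^ (-p) := by
        gcongr
        exact rpow_mul_one_add_norm_smul_sq_rpow_neg_le ht₀ ht₁ hp x
    _ ≤ f x := hlow x

end

theorem stmt11_general
    (d : ℕ) (τ : ℝ) (hτ : 1 < τ)
    (c₁ c₂ : ℝ) (hc₁ : 0 < c₁) (hc₁₂ : c₁ ≤ c₂)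
    (hatψ : EuclideanSpace ℝ (Fin d) → ℝ)
    (hlow : ∀ ω : EuclideanSpace ℝ (Fin d), c₁ * (1 + ‖ω‖ ^ 2) ^ (-τ + 1) ≤ hatψ ω)
    (hhigh : ∀ ω : EuclideanSpace ℝ (Fin d), hatψ ω ≤ c₂ * (1 + ‖ω‖ ^ 2) ^ (-τ + 1)) :
    ∀ a δ : ℝ, 0 < a → a ≤ 1 → a ≤ δ → δ ≤ 1 →
      ∀ ω : EuclideanSpace ℝ (Fin d),
        c₁ / c₂ * (a / δ) ^ (2 * τ - 2) * hatψ (a • ω) ≤ hatψ (δ • ω) := by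
  intro a δ ha _ haδ _ ω
  have hδ : 0 < δ := ha.trans_le haδ
  have hexp : -τ + 1 = -(τ - 1) := by ring
  rw [hexp] at hlow hhigh
  have hscale : (a / δ) • δ • ω = a • ω := by rw [smul_smul, div_mul_cancel₀ a hδ.ne']
  have h := le_of_two_sided_rpow_bound_smul hc₁.le (hc₁.trans_le hc₁₂) (by linarith) hlow hhigh
    (div_pos ha hδ) ((div_le_one hδ).mpr haδ) (δ • ω)
  rwa [hscale, show 2 * (τ - 1) = 2 * τ - 2 by ring] at h

/-- if `ψ̂` satisfies `c₁(1+‖ω‖²)^{-τ+1} ≤ ψ̂(ω) ≤ c₂(1+‖ω‖²)^{-τ+1}` with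
`τ > 1`, then for `0 < a ≤ 1` with `a ≤ δ ≤ 1` and all `ω`:
`ψ̂_δ(ω) ≥ (c₁/c₂)(a/δ)^{2τ-2} ψ̂_a(ω)`, where `ψ̂_δ(ω) = ψ̂(δω)`. -/
theorem stmt11
    (d : ℕ) (hd : 0 < d) (τ : ℝ) (hτ : 1 < τ)
    (c₁ c₂ : ℝ) (hc₁ : 0 < c₁) (hc₁₂ : c₁ ≤ c₂)
    (ψ : EuclideanSpace ℝ (Fin d) → ℝ)
    (hψint : Integrable ψ)
    (hψeven : ∀ x, ψ (-x) = ψ x)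
    (hatψ : EuclideanSpace ℝ (Fin d) → ℝ)
    (hhat : ∀ ω, ft (fun x => (ψ x : ℂ)) ω = (hatψ ω : ℂ))
    (hlow : ∀ ω : EuclideanSpace ℝ (Fin d), c₁ * (1 + ‖ω‖ ^ 2) ^ (-τ + 1) ≤ hatψ ω)
    (hhigh : ∀ ω : EuclideanSpace ℝ (Fin d), hatψ ω ≤ c₂ * (1 + ‖ω‖ ^ 2) ^ (-τ + 1)) :
    ∀ a δ : ℝ, 0 < a → a ≤ 1 → a ≤ δ → δ ≤ 1 →
      ∀ ω : EuclideanSpace ℝ (Fin d),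
        c₁ / c₂ * (a / δ) ^ (2 * τ - 2) * hatψ (a • ω) ≤ hatψ (δ • ω) :=
  stmt11_general d τ hτ c₁ c₂ hc₁ hc₁₂ hatψ hlow hhigh
end

section
/- Let τ > −1 and let ψ : ℝ^d → ℝ be an even integrable function whose Fourier transform satisfies c₁(1+‖ω‖₂²)^{-τ-1} ≤ ψ̂(ω) ≤ c₂(1+‖ω‖₂²)^{-τ-1} for all ω ∈ ℝ^d, with 0 < c₁ ≤ c₂. Define the matrix-valued Fourier symbol Ψ̂_δ(ω) := (‖ω‖₂² I − ωω^T) ψ̂(δω) for δ > 0, where I is the d×d identity matrix. Then for all 0 < a ≤ 1 with a ≤ δ ≤ 1 and all ω ∈ ℝ^d, the matrix Ψ̂_δ(ω) − (c₁/c₂)(a/δ)^{2τ+2} Ψ̂_a(ω) is positive semidefinite. -/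
/-!
The symbol factors as `Ψ̂_δ(ω) = ψ̂(δω) P(ω)` with `P(ω) = ‖ω‖² I − ωωᵀ` positive semidefinite
(Cauchy–Schwarz), so the difference is `(ψ̂(δω) − c ψ̂(aω)) P(ω)` and it suffices that the scalar
factor is nonnegative. Bounding `ψ̂(aω)` above and `ψ̂(δω)` below by the two-sided estimate, this
reduces to `(a/δ)^{2τ+2} (1 + a²‖ω‖²)^{-τ-1} ≤ (1 + δ²‖ω‖²)^{-τ-1}`, i.e. to
`a² (1 + δ²‖ω‖²) ≤ δ² (1 + a²‖ω‖²)`, which holds because `a ≤ δ`.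
-/

open MeasureTheory

/-- The matrix-valued Fourier symbol `Ψ̂_δ(ω) = (‖ω‖₂² I − ωω^T) ψ̂(δω)` of the
divergence-free kernel `Ψ_{τ+1,δ} = (−ΔI + ∇∇^T)ψ_δ`. -/
noncomputable def matSymbol {d : ℕ} (hatψ : EuclideanSpace ℝ (Fin d) → ℝ) (δ : ℝ)
    (ω : EuclideanSpace ℝ (Fin d)) : Matrix (Fin d) (Fin d) ℝ :=
  Matrix.of fun i j =>
    (‖ω‖ ^ 2 * (if i = j then 1 else 0) - ω i * ω j) * hatψ (δ • ω)

open Matrix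

theorem posSemidef_dotProduct_self_smul_one_sub_vecMulVec {ι : Type*} [Fintype ι]
    [DecidableEq ι] (v : ι → ℝ) : ((v ⬝ᵥ v) • (1 : Matrix ι ι ℝ) - vecMulVec v v).PosSemidef := by
  refine posSemidef_iff_dotProduct_mulVec.2 ⟨?_, fun x => ?_⟩
  · exact (isHermitian_one.smul (IsSelfAdjoint.all _)).sub
      (by simpa using (posSemidef_vecMulVec_self_star v).isHermitian)
  · have hCS : (x ⬝ᵥ v) ^ 2 ≤ (v ⬝ᵥ v) * (x ⬝ᵥ x) := by
      simpa [dotProduct, sq, mul_comm] using Finset.sum_mul_sq_le_sq_mul_sq Finset.univ x v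
    simp only [sub_mulVec, smul_mulVec, one_mulVec, vecMulVec_mulVec, dotProduct_sub,
      dotProduct_smul, star_trivial, smul_eq_mul]
    rw [MulOpposite.smul_eq_mul_unop, MulOpposite.unop_op, dotProduct_comm v x, ← sq]
    exact sub_nonneg.2 hCS

theorem div_rpow_mul_one_add_sq_mul_rpow_neg_le {a δ r s : ℝ} (ha : 0 < a) (haδ : a ≤ δ)
    (hr : 0 ≤ r) (hs : 0 ≤ s) :
    (a / δ) ^ (2 * s) * (1 + a ^ 2 * r) ^ (-s) ≤ (1 + δ ^ 2 * r) ^ (-s) := by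
  have hδ : 0 < δ := ha.trans_le haδ
  have hbase : (a / δ) ^ 2 / (1 + a ^ 2 * r) ≤ (1 + δ ^ 2 * r)⁻¹ := by
    rw [inv_eq_one_div, div_pow, div_div, div_le_div_iff₀ (by positivity) (by positivity)]
    nlinarith [pow_le_pow_left₀ ha.le haδ 2]
  calc (a / δ) ^ (2 * s) * (1 + a ^ 2 * r) ^ (-s)
      = ((a / δ) ^ 2 / (1 + a ^ 2 * r)) ^ s := by
        rw [Real.rpow_mul (by positivity), Real.rpow_two, Real.rpow_neg (by positivity),
          Real.div_rpow (by positivity) (by positivity)]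
        ring
    _ ≤ (1 + δ ^ 2 * r)⁻¹ ^ s := Real.rpow_le_rpow (by positivity) hbase hs
    _ = (1 + δ ^ 2 * r) ^ (-s) := by
        rw [Real.inv_rpow (by positivity), Real.rpow_neg (by positivity)]

theorem mul_apply_smul_le_apply_smul_of_bounds {E : Type*} [NormedAddCommGroup E]
    [NormedSpace ℝ E] {f : E → ℝ} {c₁ c₂ s a δ : ℝ} (hc₁ : 0 ≤ c₁) (hc₂ : 0 < c₂) (hs : 0 ≤ s)
    (ha : 0 < a) (haδ : a ≤ δ)
    (hlow : ∀ ω, c₁ * (1 + ‖ω‖ ^ 2) ^ (-s) ≤ f ω)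
    (hhigh : ∀ ω, f ω ≤ c₂ * (1 + ‖ω‖ ^ 2) ^ (-s)) (ω : E) :
    c₁ / c₂ * (a / δ) ^ (2 * s) * f (a • ω) ≤ f (δ • ω) := by
  have hδ : 0 < δ := ha.trans_le haδ
  have hnorm : ∀ {t : ℝ}, 0 < t → ‖t • ω‖ ^ 2 = t ^ 2 * ‖ω‖ ^ 2 := fun ht => by
    rw [norm_smul, Real.norm_of_nonneg ht.le, mul_pow]
  calc c₁ / c₂ * (a / δ) ^ (2 * s) * f (a • ω)
      ≤ c₁ / c₂ * (a / δ) ^ (2 * s) * (c₂ * (1 + a ^ 2 * ‖ω‖ ^ 2) ^ (-s)) := by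
        gcongr
        simpa only [hnorm ha] using hhigh (a • ω)
    _ = c₁ * ((a / δ) ^ (2 * s) * (1 + a ^ 2 * ‖ω‖ ^ 2) ^ (-s)) := by field_simp
    _ ≤ c₁ * (1 + δ ^ 2 * ‖ω‖ ^ 2) ^ (-s) := by
        gcongr
        exact div_rpow_mul_one_add_sq_mul_rpow_neg_le ha haδ (sq_nonneg _) hs
    _ ≤ f (δ • ω) := by simpa only [hnorm hδ] using hlow (δ • ω)

theorem matSymbol_eq_smul {d : ℕ} (hatψ : EuclideanSpace ℝ (Fin d) → ℝ) (δ : ℝ)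
    (ω : EuclideanSpace ℝ (Fin d)) :
    matSymbol hatψ δ ω =
      hatψ (δ • ω) • ((ω.ofLp ⬝ᵥ ω.ofLp) • (1 : Matrix (Fin d) (Fin d) ℝ) -
        vecMulVec ω.ofLp ω.ofLp) := by
  have hnorm : ‖ω‖ ^ 2 = ω.ofLp ⬝ᵥ ω.ofLp := by
    rw [EuclideanSpace.real_norm_sq_eq]
    simp [dotProduct, sq]
  ext i j
  simp [matSymbol, hnorm, vecMulVec_apply, one_apply, mul_comm]

theorem stmt12_general
    (d : ℕ) (τ : ℝ) (hτ : -1 < τ)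
    (c₁ c₂ : ℝ) (hc₁ : 0 < c₁) (hc₁₂ : c₁ ≤ c₂)
    (hatψ : EuclideanSpace ℝ (Fin d) → ℝ)
    (hlow : ∀ ω : EuclideanSpace ℝ (Fin d), c₁ * (1 + ‖ω‖ ^ 2) ^ (-τ - 1) ≤ hatψ ω)
    (hhigh : ∀ ω : EuclideanSpace ℝ (Fin d), hatψ ω ≤ c₂ * (1 + ‖ω‖ ^ 2) ^ (-τ - 1)) :
    ∀ a δ : ℝ, 0 < a → a ≤ 1 → a ≤ δ → δ ≤ 1 →
      ∀ ω : EuclideanSpace ℝ (Fin d),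
        (matSymbol hatψ δ ω - (c₁ / c₂ * (a / δ) ^ (2 * τ + 2)) • matSymbol hatψ a ω).PosSemidef := by
  intro a δ ha _ haδ _ ω
  have hexp : -τ - 1 = -(τ + 1) := by ring
  have hscalar : c₁ / c₂ * (a / δ) ^ (2 * τ + 2) * hatψ (a • ω) ≤ hatψ (δ • ω) := by
    rw [show 2 * τ + 2 = 2 * (τ + 1) by ring]
    exact mul_apply_smul_le_apply_smul_of_bounds hc₁.le (hc₁.trans_le hc₁₂) (by linarith) ha haδ
      (by simpa only [hexp] using hlow) (by simpa only [hexp] using hhigh) ω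
  rw [matSymbol_eq_smul, matSymbol_eq_smul, smul_smul, ← sub_smul]
  exact (posSemidef_dotProduct_self_smul_one_sub_vecMulVec ω.ofLp).smul (sub_nonneg.2 hscalar)

/-- if `ψ̂` satisfies `c₁(1+‖ω‖²)^{-τ-1} ≤ ψ̂(ω) ≤ c₂(1+‖ω‖²)^{-τ-1}` with
`τ > -1`, then for `0 < a ≤ 1` with `a ≤ δ ≤ 1` and all `ω`, the matrix
`Ψ̂_δ(ω) − (c₁/c₂)(a/δ)^{2τ+2} Ψ̂_a(ω)` is positive semidefinite. -/
theorem stmt12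
    (d : ℕ) (hd : 0 < d) (τ : ℝ) (hτ : -1 < τ)
    (c₁ c₂ : ℝ) (hc₁ : 0 < c₁) (hc₁₂ : c₁ ≤ c₂)
    (ψ : EuclideanSpace ℝ (Fin d) → ℝ)
    (hψint : Integrable ψ)
    (hψeven : ∀ x, ψ (-x) = ψ x)
    (hatψ : EuclideanSpace ℝ (Fin d) → ℝ)
    (hhat : ∀ ω, ft (fun x => (ψ x : ℂ)) ω = (hatψ ω : ℂ))
    (hlow : ∀ ω : EuclideanSpace ℝ (Fin d), c₁ * (1 + ‖ω‖ ^ 2) ^ (-τ - 1) ≤ hatψ ω)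
    (hhigh : ∀ ω : EuclideanSpace ℝ (Fin d), hatψ ω ≤ c₂ * (1 + ‖ω‖ ^ 2) ^ (-τ - 1)) :
    ∀ a δ : ℝ, 0 < a → a ≤ 1 → a ≤ δ → δ ≤ 1 →
      ∀ ω : EuclideanSpace ℝ (Fin d),
        (matSymbol hatψ δ ω - (c₁ / c₂ * (a / δ) ^ (2 * τ + 2)) • matSymbol hatψ a ω).PosSemidef :=
  stmt12_general d τ hτ c₁ c₂ hc₁ hc₁₂ hatψ hlow hhigh
end
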